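/- arXiv:1303.5183 — 2 statements merged into one kernel-verified Lean document; each statement's English description precedes it below -/
import Mathlib

section
/- Let Γ be a countable discrete group having Property (T_{ℓ_p}) for some real number p with 1 < p < ∞ and p ≠ 2. Then Γ has Lubotzky's Property (τ). -/
open scoped ENNReal Pointwise
open Filter MeasureTheory

noncomputable section

/-- The conjugate exponent `q` of `p`, i.e. the solution of `1/p + 1/q = 1` in `ℝ≥0∞`. -/
def conjExp (p : ℝ≥0∞) : ℝ≥0∞ := (1 - p⁻¹)⁻¹

/-- The canonical pairing between `ℓ_q` and `ℓ_p`: `⟨φ, f⟩ = ∑ₓ φ(x) f(x)`. -/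
def dualPair {X : Type*} (φ f : X → ℂ) : ℂ := ∑' x, φ x * f x

/-- An orthogonal representation of a topological group `G` on `ℓ_p = ℓ_p(ℕ, ℂ)`:
a homomorphism into the group of surjective linear isometries of `ℓ_p` which is strongly
continuous. -/
structure OrthRep (G : Type*) [Group G] [TopologicalSpace G] (p : ℝ≥0∞) [Fact (1 ≤ p)] where
  toFun : G →* (lp (fun _ : ℕ => ℂ) p ≃ₗᵢ[ℂ] lp (fun _ : ℕ => ℂ) p)
  continuous_apply : ∀ f : lp (fun _ : ℕ => ℂ) p, Continuous fun g => toFun g f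

/-- `φ ∈ ℓ_q` is an invariant vector for the dual representation `π*` on `ℓ_q`
(where `π*(g) = (π(g⁻¹))ᵀ`), i.e. `⟨φ, π(g) f⟩ = ⟨φ, f⟩` for all `g` and `f`. -/
def OrthRep.DualInvariant {G : Type*} [Group G] [TopologicalSpace G] {p : ℝ≥0∞}
    [Fact (1 ≤ p)] (π : OrthRep G p) (φ : ℕ → ℂ) : Prop :=
  Memℓp φ (conjExp p) ∧
    ∀ (g : G) (f : lp (fun _ : ℕ => ℂ) p), dualPair φ (π.toFun g f) = dualPair φ f

/-- `ℓ'_p(π)`: the annihilator in `ℓ_p` of the subspace of `π*(G)`-invariant vectors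
of `ℓ_q`. -/
def OrthRep.ann {G : Type*} [Group G] [TopologicalSpace G] {p : ℝ≥0∞}
    [Fact (1 ≤ p)] (π : OrthRep G p) : Set (lp (fun _ : ℕ => ℂ) p) :=
  {f | ∀ φ : ℕ → ℂ, π.DualInvariant φ → dualPair φ f = 0}

/-- There is a sequence of almost invariant unit vectors for `π` lying in the subset `S`:
unit vectors `f_n ∈ S` with `lim_n sup_{g ∈ Q} ‖π(g) f_n - f_n‖ = 0` for every compact
`Q ⊆ G`. -/
def OrthRep.HasAlmostInvariantSeq {G : Type*} [Group G] [TopologicalSpace G] {p : ℝ≥0∞}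
    [Fact (1 ≤ p)] (π : OrthRep G p) (S : Set (lp (fun _ : ℕ => ℂ) p)) : Prop :=
  ∃ f : ℕ → lp (fun _ : ℕ => ℂ) p, (∀ n, f n ∈ S) ∧ (∀ n, ‖f n‖ = 1) ∧
    ∀ Q : Set G, IsCompact Q → ∀ ε : ℝ, 0 < ε →
      ∃ N : ℕ, ∀ n ≥ N, ∀ g ∈ Q, ‖π.toFun g (f n) - f n‖ < ε

/-- Property `(T_{ℓ_p})` for a topological group `G`: no orthogonal representation of `G`
on `ℓ_p` admits a sequence of almost invariant unit vectors in `ℓ'_p(π)`. -/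
def HasPropertyTlp (G : Type*) [Group G] [TopologicalSpace G] (p : ℝ) : Prop :=
  ∀ [Fact (1 ≤ ENNReal.ofReal p)],
    ∀ π : OrthRep G (ENNReal.ofReal p), ¬ π.HasAlmostInvariantSeq π.ann

/-- Composing with a permutation of the index set and multiplying with a function of
modulus one preserves membership in `ℓ_p`. -/
theorem Memℓp.twist {X : Type*} {p : ℝ≥0∞} (e : Equiv.Perm X) {h : X → ℂ}
    (hh : ∀ x, ‖h x‖ = 1) {f : X → ℂ} (hf : Memℓp f p) :
    Memℓp (fun x => h x * f (e x)) p := by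
  have hnorm : ∀ x, ‖h x * f (e x)‖ = ‖f (e x)‖ := fun x => by
    rw [norm_mul, hh x, one_mul]
  rcases ENNReal.trichotomy p with rfl | rfl | hp
  · rw [memℓp_zero_iff] at hf ⊢
    have hsub : {x | h x * f (e x) ≠ 0} ⊆ e ⁻¹' {y | f y ≠ 0} := by
      intro x hx
      simp only [Set.mem_preimage, Set.mem_setOf_eq]
      intro h0
      exact hx (by simp [h0])
    exact (hf.preimage e.injective.injOn).subset hsub
  · rw [memℓp_infty_iff] at hf ⊢
    obtain ⟨C, hC⟩ := hf
    refine ⟨C, ?_⟩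
    rintro r ⟨x, rfl⟩
    show ‖h x * f (e x)‖ ≤ C
    rw [hnorm x]
    exact hC ⟨e x, rfl⟩
  · rw [memℓp_gen_iff hp] at hf ⊢
    have hs : Summable ((fun y => ‖f y‖ ^ p.toReal) ∘ e) :=
      (Equiv.summable_iff e).mpr hf
    refine hs.congr fun x => ?_
    simp only [Function.comp_apply]
    rw [hnorm x]

/-- The permutation representation of `G` on `ℓ_2(X)` twisted by the cocycle `c`:
`(λ_X^c(g) f)(x) = c(g⁻¹, x) f(g⁻¹ x)`. -/
def twistedL2 {G X : Type*} [Group G] [MulAction G X] (c : G → X → ℂ)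
    (hc : ∀ g x, ‖c g x‖ = 1) (g : G) (f : lp (fun _ : X => ℂ) 2) :
    lp (fun _ : X => ℂ) 2 :=
  ⟨fun x => c g⁻¹ x * f (g⁻¹ • x),
    (lp.memℓp f).twist (MulAction.toPerm (g⁻¹ : G)) (fun x => hc g⁻¹ x)⟩

/-- The (untwisted) permutation representation of `G` on `ℓ_2(X)`:
`(λ_X(g) f)(x) = f(g⁻¹ x)`. -/
def permL2 {G X : Type*} [Group G] [MulAction G X] (g : G) (f : lp (fun _ : X => ℂ) 2) :
    lp (fun _ : X => ℂ) 2 :=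
  twistedL2 (fun _ _ => 1) (fun _ _ => norm_one) g f

/-- Lubotzky's Property `(τ)` for a discrete group `Γ`: there are a finite `Q ⊆ Γ` and
`ε > 0` such that for every finite-index subgroup `H ≤ Γ` and every `f ∈ ℓ_2(Γ/H)`
orthogonal to the constant functions, `max_{g ∈ Q} ‖λ_{Γ/H}(g) f - f‖ ≥ ε ‖f‖`. -/
def PropertyTau (Γ : Type*) [Group Γ] : Prop :=
  ∃ (Q : Finset Γ) (ε : ℝ), 0 < ε ∧
    ∀ H : Subgroup Γ, H.FiniteIndex →
      ∀ f : lp (fun _ : Γ ⧸ H => ℂ) 2,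
        (∀ f₀ : lp (fun _ : Γ ⧸ H => ℂ) 2, (∀ x y : Γ ⧸ H, f₀ x = f₀ y) →
          inner ℂ f₀ f = (0 : ℂ)) →
        ∃ g ∈ Q, ε * ‖f‖ ≤ ‖permL2 g f - f‖

/-!
If `Γ` fails `(τ)`, there are finite quotients `Γ ⧸ H n` carrying mean-zero unit vectors of
`ℓ_2(Γ ⧸ H n)` that are more and more invariant. Passing to the real or imaginary part and
applying the Mazur map `t ↦ sign t · |t| ^ (2 / p)` gives unit vectors of `ℓ_p(Γ ⧸ H n)` that are
still almost invariant, since the Mazur map is uniformly continuous on bounded sets. Their images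
stay uniformly far from the constants, so recentring and renormalising them costs only a constant.
On `ℓ_p` of the countable set `Σ n, Γ ⧸ H n` the resulting mean-zero vectors lie in `ℓ'_p(π)` and
are almost invariant, contradicting `(T_{ℓ_p})`.
-/

open Finset Function Topology

lemma rpow_sub_rpow_le {γ : ℝ} (hγ : 1 ≤ γ) {a b : ℝ} (hb : 0 ≤ b) (hba : b ≤ a) :
    a ^ γ - b ^ γ ≤ γ * a ^ (γ - 1) * (a - b) := by
  have ha := hb.trans hba
  have hγ0 : 0 < γ := zero_lt_one.trans_le hγ
  -- weighted AM-GM: `b ^ γ` with weight `1 / γ` and `a ^ γ` with weight `1 - 1 / γ`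
  have amgm := Real.geom_mean_le_arith_mean2_weighted (inv_nonneg.2 hγ0.le)
    (sub_nonneg.2 (inv_le_one_of_one_le₀ hγ)) (Real.rpow_nonneg hb γ) (Real.rpow_nonneg ha γ)
    (add_sub_cancel γ⁻¹ 1)
  rw [← Real.rpow_mul hb, mul_inv_cancel₀ hγ0.ne', Real.rpow_one, ← Real.rpow_mul ha,
    mul_sub, mul_one, mul_inv_cancel₀ hγ0.ne'] at amgm
  have hsplit : a ^ γ = a ^ (γ - 1) * a := by
    rw [← Real.rpow_add_one' ha (by linarith), sub_add_cancel]
  have scaled := mul_le_mul_of_nonneg_left amgm hγ0.le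
  have expand : γ * (γ⁻¹ * b ^ γ + (1 - γ⁻¹) * a ^ γ) = b ^ γ + (γ - 1) * a ^ γ := by
    field_simp
  rw [expand] at scaled
  rw [hsplit] at scaled ⊢
  linarith

lemma add_rpow_le_two_rpow_mul {x y s : ℝ} (hx : 0 ≤ x) (hy : 0 ≤ y) (hs : 0 ≤ s) :
    (x + y) ^ s ≤ 2 ^ s * (x ^ s + y ^ s) := by
  wlog hxy : x ≤ y generalizing x y
  · rw [add_comm x, add_comm (x ^ s)]
    exact this hy hx (le_of_not_ge hxy)
  calc (x + y) ^ s ≤ (2 * y) ^ s := by gcongr; linarith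
    _ = 2 ^ s * y ^ s := Real.mul_rpow zero_le_two hy
    _ ≤ 2 ^ s * (x ^ s + y ^ s) := by gcongr; linarith [Real.rpow_nonneg hx s]

lemma add_rpow_le_two_rpow_sub_one_mul {x y p : ℝ} (hx : 0 ≤ x) (hy : 0 ≤ y) (hp : 1 ≤ p) :
    (x + y) ^ p ≤ 2 ^ (p - 1) * (x ^ p + y ^ p) := by
  lift x to NNReal using hx
  lift y to NNReal using hy
  exact_mod_cast NNReal.rpow_add_le_mul_rpow_add_rpow x y hp

/-- Applied coordinatewise, `signPow γ` is the Mazur map `ℓ_r → ℓ_{r/γ}`. -/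
def signPow (γ t : ℝ) : ℝ := Real.sign t * |t| ^ γ

section SignPow

variable {γ δ : ℝ}

lemma signPow_neg (γ t : ℝ) : signPow γ (-t) = -signPow γ t := by
  simp [signPow, Real.sign_neg]

lemma signPow_of_nonneg (hγ : 0 < γ) {t : ℝ} (ht : 0 ≤ t) : signPow γ t = t ^ γ := by
  rcases ht.eq_or_lt with rfl | ht
  · simp [signPow, Real.zero_rpow hγ.ne']
  · simp [signPow, Real.sign_of_pos ht, abs_of_pos ht]

lemma nonneg_or_exists_neg (t : ℝ) : 0 ≤ t ∨ ∃ s, 0 ≤ s ∧ t = -s :=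
  (le_total 0 t).imp_right fun ht => ⟨-t, neg_nonneg.2 ht, (neg_neg t).symm⟩

lemma abs_signPow (hγ : 0 < γ) (t : ℝ) : |signPow γ t| = |t| ^ γ := by
  rcases nonneg_or_exists_neg t with ht | ⟨s, hs, rfl⟩
  · rw [signPow_of_nonneg hγ ht, abs_of_nonneg ht, abs_of_nonneg (Real.rpow_nonneg ht γ)]
  · rw [signPow_neg, abs_neg, abs_neg, signPow_of_nonneg hγ hs, abs_of_nonneg hs,
      abs_of_nonneg (Real.rpow_nonneg hs γ)]

lemma signPow_signPow (hγ : 0 < γ) (hδ : 0 < δ) (t : ℝ) :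
    signPow γ (signPow δ t) = signPow (δ * γ) t := by
  have key : ∀ s, 0 ≤ s → signPow γ (signPow δ s) = signPow (δ * γ) s := fun s hs => by
    rw [signPow_of_nonneg hδ hs, signPow_of_nonneg hγ (Real.rpow_nonneg hs δ),
      signPow_of_nonneg (mul_pos hδ hγ) hs, Real.rpow_mul hs]
  rcases nonneg_or_exists_neg t with ht | ⟨s, hs, rfl⟩
  · exact key t ht
  · rw [signPow_neg, signPow_neg, signPow_neg, key s hs]

lemma signPow_one (t : ℝ) : signPow 1 t = t := by
  rcases nonneg_or_exists_neg t with ht | ⟨s, hs, rfl⟩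
  · rw [signPow_of_nonneg one_pos ht, Real.rpow_one]
  · rw [signPow_neg, signPow_of_nonneg one_pos hs, Real.rpow_one]

lemma forall_of_nonneg_cases {P : ℝ → ℝ → Prop} (swap : ∀ a b, P a b → P b a)
    (neg : ∀ a b, P a b → P (-a) (-b)) (same : ∀ a b, 0 ≤ b → b ≤ a → P a b)
    (opp : ∀ a b, 0 ≤ a → 0 ≤ b → P a (-b)) (a b : ℝ) : P a b := by
  have nonneg : ∀ a b, 0 ≤ a → 0 ≤ b → P a b := fun a b ha hb =>
    (le_total b a).elim (same a b hb) fun h => swap _ _ (same b a ha h)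
  rcases le_total 0 a with ha | ha <;> rcases le_total 0 b with hb | hb
  · exact nonneg a b ha hb
  · simpa using opp a (-b) ha (neg_nonneg.2 hb)
  · simpa using swap _ _ (opp b (-a) hb (neg_nonneg.2 ha))
  · simpa using neg _ _ (nonneg (-a) (-b) (neg_nonneg.2 ha) (neg_nonneg.2 hb))

lemma abs_signPow_sub_le_of_le_one (hγ0 : 0 < γ) (hγ1 : γ ≤ 1) (a b : ℝ) :
    |signPow γ a - signPow γ b| ≤ 2 * |a - b| ^ γ := by
  induction a, b using forall_of_nonneg_cases with
  | swap a b h => rwa [abs_sub_comm, abs_sub_comm b]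
  | neg a b h => rwa [signPow_neg, signPow_neg, ← neg_sub', abs_neg, neg_sub_neg, abs_sub_comm b]
  | same a b hb hba =>
    have hab := sub_nonneg.2 hba
    have sub_le := Real.rpow_add_le_add_rpow hab hb hγ0.le hγ1
    rw [sub_add_cancel] at sub_le
    rw [signPow_of_nonneg hγ0 (hb.trans hba), signPow_of_nonneg hγ0 hb, abs_of_nonneg hab,
      abs_of_nonneg (sub_nonneg.2 (Real.rpow_le_rpow hb hba hγ0.le))]
    linarith [Real.rpow_nonneg hab γ]
  | opp a b ha hb =>
    rw [signPow_neg, sub_neg_eq_add, sub_neg_eq_add, signPow_of_nonneg hγ0 ha,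
      signPow_of_nonneg hγ0 hb, abs_of_nonneg (by positivity), abs_of_nonneg (add_nonneg ha hb)]
    linarith [Real.rpow_le_rpow ha (le_add_of_nonneg_right hb) hγ0.le,
      Real.rpow_le_rpow hb (le_add_of_nonneg_left ha) hγ0.le]

lemma abs_signPow_sub_le_of_one_le (hγ : 1 ≤ γ) (a b : ℝ) :
    |signPow γ a - signPow γ b| ≤ γ * (|a| + |b|) ^ (γ - 1) * |a - b| := by
  have hγ0 : 0 < γ := zero_lt_one.trans_le hγ
  induction a, b using forall_of_nonneg_cases with
  | swap a b h => rwa [abs_sub_comm, abs_sub_comm b, add_comm |b|]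
  | neg a b h => rwa [signPow_neg, signPow_neg, ← neg_sub', abs_neg, neg_sub_neg, abs_sub_comm b,
      abs_neg, abs_neg]
  | same a b hb hba =>
    have ha := hb.trans hba
    have hab := sub_nonneg.2 hba
    rw [signPow_of_nonneg hγ0 ha, signPow_of_nonneg hγ0 hb, abs_of_nonneg hab, abs_of_nonneg ha,
      abs_of_nonneg hb, abs_of_nonneg (sub_nonneg.2 (Real.rpow_le_rpow hb hba hγ0.le))]
    calc a ^ γ - b ^ γ ≤ γ * a ^ (γ - 1) * (a - b) := rpow_sub_rpow_le hγ hb hba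
      _ ≤ γ * (a + b) ^ (γ - 1) * (a - b) := by
        gcongr
        linarith
  | opp a b ha hb =>
    have hab := add_nonneg ha hb
    rw [signPow_neg, sub_neg_eq_add, sub_neg_eq_add, signPow_of_nonneg hγ0 ha,
      signPow_of_nonneg hγ0 hb, abs_of_nonneg (by positivity), abs_of_nonneg hab,
      abs_neg, abs_of_nonneg ha, abs_of_nonneg hb]
    calc a ^ γ + b ^ γ ≤ (a + b) ^ γ := Real.add_rpow_le_rpow_add ha hb hγ
      _ = 1 * (a + b) ^ (γ - 1) * (a + b) := by
        rw [one_mul, ← Real.rpow_add_one' hab (by linarith), sub_add_cancel]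
      _ ≤ γ * (a + b) ^ (γ - 1) * (a + b) := by gcongr

end SignPow

section FiniteSums

variable {D : Type*} [Fintype D]

lemma sum_abs_div_rpow {p t : ℝ} (ht : 0 < t) (z : D → ℝ) :
    ∑ x, |z x / t| ^ p = (∑ x, |z x| ^ p) / t ^ p := by
  rw [sum_div]
  exact sum_congr rfl fun x _ => by rw [abs_div, abs_of_pos ht, Real.div_rpow (abs_nonneg _) ht.le]

lemma sum_sq_sub_const_of_sum_eq_zero {w : D → ℝ} (hw : ∑ x, w x = 0) (c : ℝ) :
    ∑ x, (w x - c) ^ 2 = ∑ x, w x ^ 2 + Fintype.card D * c ^ 2 := by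
  simp only [sub_sq, sum_add_distrib, sum_sub_distrib, ← sum_mul, ← mul_sum, hw, sum_const,
    card_univ, nsmul_eq_mul]
  ring

lemma exists_real_of_complex (F : D → ℂ) (hF0 : ∑ x, F x = 0)
    (hF2 : ∑ x, ‖F x‖ ^ (2 : ℝ) = 1) :
    ∃ w : D → ℝ, ∑ x, w x = 0 ∧ ∑ x, |w x| ^ (2 : ℝ) = 1 ∧ ∀ σ : Equiv.Perm D,
      ∑ x, |w (σ x) - w x| ^ (2 : ℝ) ≤ 2 * ∑ x, ‖F (σ x) - F x‖ ^ (2 : ℝ) := by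
  -- `w` is the normalised real or imaginary part, whichever carries half of the `ℓ_2` mass
  obtain ⟨ℓ, hℓ, hmass⟩ : ∃ ℓ : ℂ →ₗ[ℝ] ℝ,
      (∀ z, |ℓ z| ≤ ‖z‖) ∧ 1 ≤ 2 * ∑ x, |ℓ (F x)| ^ (2 : ℝ) := by
    have hsplit : ∑ x, |(F x).re| ^ (2 : ℝ) + ∑ x, |(F x).im| ^ (2 : ℝ) = 1 := by
      rw [← hF2, ← sum_add_distrib]
      refine sum_congr rfl fun x _ => ?_
      simp only [Real.rpow_two, sq_abs, Complex.sq_norm, Complex.normSq_apply]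
      ring
    rcases le_total (∑ x, |(F x).re| ^ (2 : ℝ)) (∑ x, |(F x).im| ^ (2 : ℝ)) with h | h
    · exact ⟨Complex.imLm, Complex.abs_im_le_norm, by simp only [Complex.imLm_coe]; linarith⟩
    · exact ⟨Complex.reLm, Complex.abs_re_le_norm, by simp only [Complex.reLm_coe]; linarith⟩
  set S := ∑ x, |ℓ (F x)| ^ (2 : ℝ)
  have hS : 0 < S := by linarith
  have ht : 0 < S ^ (2 : ℝ)⁻¹ := by positivity
  have htS : (S ^ (2 : ℝ)⁻¹) ^ (2 : ℝ) = S := Real.rpow_inv_rpow hS.le two_ne_zero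
  refine ⟨fun x => ℓ (F x) / S ^ (2 : ℝ)⁻¹, ?_, ?_, fun σ => ?_⟩
  · rw [← sum_div, ← map_sum, hF0, map_zero, zero_div]
  · rw [sum_abs_div_rpow ht, htS, div_self hS.ne']
  · simp only [div_sub_div_same, ← map_sub]
    rw [sum_abs_div_rpow ht, htS, div_le_iff₀ hS]
    have hle : ∑ x, |ℓ (F (σ x) - F x)| ^ (2 : ℝ) ≤ ∑ x, ‖F (σ x) - F x‖ ^ (2 : ℝ) :=
      sum_le_sum fun x _ => by gcongr; exact hℓ _
    nlinarith [sum_nonneg fun x (_ : x ∈ univ) => Real.rpow_nonneg (norm_nonneg (F (σ x) - F x)) 2]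

variable {r R : ℝ}

lemma sum_abs_signPow_sub_rpow_le_of_le (hr : 0 < r) (hrR : r ≤ R) (f g : D → ℝ) :
    ∑ x, |signPow (r / R) (f x) - signPow (r / R) (g x)| ^ R ≤
      2 ^ R * ∑ x, |f x - g x| ^ r := by
  have hR : 0 < R := hr.trans_le hrR
  rw [mul_sum]
  refine sum_le_sum fun x _ => ?_
  calc |signPow (r / R) (f x) - signPow (r / R) (g x)| ^ R
      ≤ (2 * |f x - g x| ^ (r / R)) ^ R := by
        gcongr
        exact abs_signPow_sub_le_of_le_one (div_pos hr hR) ((div_le_one hR).2 hrR) _ _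
    _ = 2 ^ R * |f x - g x| ^ r := by
        rw [Real.mul_rpow zero_le_two (by positivity), ← Real.rpow_mul (abs_nonneg _),
          div_mul_cancel₀ _ hR.ne']

lemma sum_abs_add_abs_rpow_le {r : ℝ} (hr : 0 ≤ r) (f g : D → ℝ) :
    ∑ x, (|f x| + |g x|) ^ r ≤ 2 ^ r * (∑ x, |f x| ^ r + ∑ x, |g x| ^ r) := by
  rw [← sum_add_distrib, mul_sum]
  exact sum_le_sum fun x _ => add_rpow_le_two_rpow_mul (abs_nonneg _) (abs_nonneg _) hr

lemma sum_abs_signPow_sub_rpow_le_of_lt (hR : 0 < R) (hRr : R < r) (f g : D → ℝ) :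
    ∑ x, |signPow (r / R) (f x) - signPow (r / R) (g x)| ^ R ≤
      (r / R) ^ R * (∑ x, (|f x| + |g x|) ^ r) ^ (1 - R / r) *
        (∑ x, |f x - g x| ^ r) ^ (R / r) := by
  have hr : 0 < r := hR.trans hRr
  have hrR : 0 < r - R := sub_pos.2 hRr
  set γ := r / R with hγ
  have hγ1 : 1 ≤ γ := (one_le_div hR).2 hRr.le
  have hconj : (r / (r - R)).HolderConjugate γ := by
    rw [Real.holderConjugate_iff]
    refine ⟨(one_lt_div hrR).2 (by linarith), ?_⟩
    rw [hγ]
    field_simp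
    ring
  set A : D → ℝ := fun x => (|f x| + |g x|) ^ ((γ - 1) * R)
  set B : D → ℝ := fun x => |f x - g x| ^ R
  have pointwise : ∀ x, |signPow γ (f x) - signPow γ (g x)| ^ R ≤ γ ^ R * (A x * B x) := by
    intro x
    calc |signPow γ (f x) - signPow γ (g x)| ^ R
        ≤ (γ * (|f x| + |g x|) ^ (γ - 1) * |f x - g x|) ^ R := by
          gcongr
          exact abs_signPow_sub_le_of_one_le hγ1 _ _
      _ = γ ^ R * (A x * B x) := by
          rw [Real.mul_rpow (by positivity) (abs_nonneg _), Real.mul_rpow (by positivity)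
            (by positivity), ← Real.rpow_mul (by positivity), mul_assoc]
  have sumA : ∑ x, A x ^ (r / (r - R)) = ∑ x, (|f x| + |g x|) ^ r := sum_congr rfl fun x _ => by
    rw [← Real.rpow_mul (by positivity), hγ]
    congr 1
    field_simp
  have sumB : ∑ x, B x ^ γ = ∑ x, |f x - g x| ^ r := sum_congr rfl fun x _ => by
    rw [← Real.rpow_mul (abs_nonneg _), hγ, mul_div_cancel₀ _ hR.ne']
  have exponent : 1 / (r / (r - R)) = 1 - R / r := by field_simp
  calc ∑ x, |signPow γ (f x) - signPow γ (g x)| ^ R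
      ≤ ∑ x, γ ^ R * (A x * B x) := sum_le_sum fun x _ => pointwise x
    _ = γ ^ R * ∑ x, A x * B x := (mul_sum _ _ _).symm
    _ ≤ γ ^ R * ((∑ x, A x ^ (r / (r - R))) ^ (1 / (r / (r - R))) *
          (∑ x, B x ^ γ) ^ (1 / γ)) := by
        gcongr
        exact Real.inner_le_Lp_mul_Lq_of_nonneg univ hconj (fun x _ => by positivity)
          (fun x _ => by positivity)
    _ = _ := by rw [sumA, sumB, exponent, hγ, one_div_div, mul_assoc]

end FiniteSums

theorem exists_sum_abs_signPow_sub_rpow_le {r R : ℝ} (hr : 0 < r) (hR : 0 < R) :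
    ∃ K θ : ℝ, 0 < K ∧ 0 < θ ∧ ∀ (D : Type*) [Fintype D] (f g : D → ℝ),
      ∑ x, |f x| ^ r ≤ 2 ^ r → ∑ x, |g x| ^ r ≤ 2 ^ r →
      ∑ x, |signPow (r / R) (f x) - signPow (r / R) (g x)| ^ R ≤
        K * (∑ x, |f x - g x| ^ r) ^ θ := by
  rcases le_or_gt r R with hrR | hRr
  · refine ⟨2 ^ R, 1, by positivity, one_pos, fun D _ f g _ _ => ?_⟩
    rw [Real.rpow_one]
    exact sum_abs_signPow_sub_rpow_le_of_le hr hrR f g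
  · refine ⟨(r / R) ^ R * (2 ^ r * (2 ^ r + 2 ^ r)) ^ (1 - R / r), R / r, by positivity,
      div_pos hR hr, fun D _ f g hf hg => (sum_abs_signPow_sub_rpow_le_of_lt hR hRr f g).trans ?_⟩
    have hfg : ∑ x, (|f x| + |g x|) ^ r ≤ 2 ^ r * (2 ^ r + 2 ^ r) :=
      (sum_abs_add_abs_rpow_le hr.le f g).trans (by gcongr)
    have hRr' : 0 ≤ 1 - R / r := sub_nonneg.2 ((div_le_one (hR.trans hRr)).2 hRr.le)
    gcongr

theorem exists_le_sum_abs_signPow_sub_const {p : ℝ} (hp : 1 < p) :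
    ∃ δ > 0, ∀ (D : Type*) [Fintype D] (w : D → ℝ), ∑ x, w x = 0 →
      ∑ x, |w x| ^ (2 : ℝ) = 1 → ∀ c : ℝ, δ ≤ ∑ x, |signPow (2 / p) (w x) - c| ^ p := by
  have hp0 : 0 < p := zero_lt_one.trans hp
  obtain ⟨K, θ, hK, hθ, transfer⟩ := exists_sum_abs_signPow_sub_rpow_le hp0 two_pos
  refine ⟨min 1 (K⁻¹ ^ θ⁻¹), by positivity, fun D _ w hw0 hw2 c => ?_⟩
  -- otherwise the inverse Mazur map would bring `w` close to a constant in `ℓ_2`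
  by_contra! hS
  set v : D → ℝ := fun x => signPow (2 / p) (w x)
  set S := ∑ x, |v x - c| ^ p
  have hv : ∑ x, |v x| ^ p = 1 := by
    rw [← hw2]
    refine sum_congr rfl fun x _ => ?_
    rw [abs_signPow (by positivity), ← Real.rpow_mul (abs_nonneg _), div_mul_cancel₀ _ hp0.ne']
  have hc : ∑ _ : D, |c| ^ p ≤ 2 ^ p := calc
    ∑ x : D, |c| ^ p ≤ ∑ x, 2 ^ (p - 1) * (|v x| ^ p + |v x - c| ^ p) := by
      refine sum_le_sum fun x _ => ?_
      calc |c| ^ p ≤ (|v x| + |v x - c|) ^ p := by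
            gcongr
            simpa using abs_sub (v x) (v x - c)
        _ ≤ _ := add_rpow_le_two_rpow_sub_one_mul (abs_nonneg _) (abs_nonneg _) hp.le
    _ = 2 ^ (p - 1) * (1 + S) := by rw [← mul_sum, sum_add_distrib, hv]
    _ ≤ 2 ^ (p - 1) * 2 := by gcongr; linarith [hS.trans_le (min_le_left _ _)]
    _ = 2 ^ p := by rw [← Real.rpow_add_one two_ne_zero, sub_add_cancel]
  have hv2 : ∑ x, |v x| ^ p ≤ 2 ^ p := hv ▸ Real.one_le_rpow one_le_two hp0.le
  have back := transfer D v (fun _ => c) hv2 hc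
  have hinv : ∀ t, signPow (p / 2) (signPow (2 / p) t) = t := fun t => by
    rw [signPow_signPow (by positivity) (by positivity),
      show 2 / p * (p / 2) = 1 by field_simp, signPow_one]
  simp only [v, hinv] at back
  have far : 1 ≤ ∑ x, |w x - signPow (p / 2) c| ^ (2 : ℝ) := by
    simp only [Real.rpow_two, sq_abs] at hw2 ⊢
    rw [sum_sq_sub_const_of_sum_eq_zero hw0, hw2]
    nlinarith [sq_nonneg (signPow (p / 2) c)]
  have close : K * S ^ θ < 1 := calc
    K * S ^ θ < K * (K⁻¹ ^ θ⁻¹) ^ θ := by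
      gcongr
      exact hS.trans_le (min_le_right _ _)
    _ = 1 := by rw [Real.rpow_inv_rpow (by positivity) hθ.ne', mul_inv_cancel₀ hK.ne']
  linarith

theorem exists_mazur_image {p : ℝ} (hp : 1 < p) :
    ∃ K θ : ℝ, 0 < K ∧ 0 < θ ∧ ∀ (D : Type*) [Fintype D] (w : D → ℝ), ∑ x, w x = 0 →
      ∑ x, |w x| ^ (2 : ℝ) = 1 → ∃ y : D → ℝ, ∑ x, y x = 0 ∧ ∑ x, |y x| ^ p = 1 ∧
        ∀ σ : Equiv.Perm D,
          ∑ x, |y (σ x) - y x| ^ p ≤ K * (∑ x, |w (σ x) - w x| ^ (2 : ℝ)) ^ θ := by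
  have hp0 : 0 < p := zero_lt_one.trans hp
  obtain ⟨K, θ, hK, hθ, transfer⟩ := exists_sum_abs_signPow_sub_rpow_le two_pos hp0
  obtain ⟨δ, hδ, far⟩ := exists_le_sum_abs_signPow_sub_const hp
  refine ⟨K / δ, θ, by positivity, hθ, fun D _ w hw0 hw2 => ?_⟩
  have : Nonempty D := by
    by_contra h
    simp [not_nonempty_iff.1 h] at hw2
  -- `y` is the Mazur image `v` of `w`, recentred and renormalised; the renormalising factor is at
  -- least `δ` by `exists_le_sum_abs_signPow_sub_const`
  set v : D → ℝ := fun x => signPow (2 / p) (w x)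
  set c := (∑ x, v x) / Fintype.card D
  set L := ∑ x, |v x - c| ^ p
  have hL : δ ≤ L := far D w hw0 hw2 c
  have hL0 : 0 < L := hδ.trans_le hL
  have ht : 0 < L ^ p⁻¹ := by positivity
  have htp : (L ^ p⁻¹) ^ p = L := Real.rpow_inv_rpow hL0.le hp0.ne'
  refine ⟨fun x => (v x - c) / L ^ p⁻¹, ?_, ?_, fun σ => ?_⟩
  · rw [← sum_div, sum_sub_distrib, sum_const, card_univ, nsmul_eq_mul,
      mul_div_cancel₀ _ (by positivity), sub_self, zero_div]
  · rw [sum_abs_div_rpow ht, htp, div_self hL0.ne']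
  · have hwσ : ∑ x, |w (σ x)| ^ (2 : ℝ) ≤ 2 ^ (2 : ℝ) := by
      rw [Equiv.sum_comp σ (fun x => |w x| ^ (2 : ℝ)), hw2]
      norm_num
    have step := transfer D (fun x => w (σ x)) w hwσ (by rw [hw2]; norm_num)
    simp only [div_sub_div_same, sub_sub_sub_cancel_right]
    rw [sum_abs_div_rpow ht, htp]
    calc (∑ x, |v (σ x) - v x| ^ p) / L ≤ K * (∑ x, |w (σ x) - w x| ^ (2 : ℝ)) ^ θ / δ :=
          div_le_div₀ (by positivity) step hδ hL
      _ = K / δ * (∑ x, |w (σ x) - w x| ^ (2 : ℝ)) ^ θ := by ring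

theorem exists_mazur_image_of_complex {p : ℝ} (hp : 1 < p) :
    ∃ K θ : ℝ, 0 < θ ∧ ∀ (D : Type*) [Fintype D] (F : D → ℂ), ∑ x, F x = 0 →
      ∑ x, ‖F x‖ ^ (2 : ℝ) = 1 → ∃ y : D → ℝ, ∑ x, y x = 0 ∧ ∑ x, |y x| ^ p = 1 ∧
        ∀ σ : Equiv.Perm D,
          ∑ x, |y (σ x) - y x| ^ p ≤ K * (∑ x, ‖F (σ x) - F x‖ ^ (2 : ℝ)) ^ θ := by
  obtain ⟨K, θ, hK, hθ, mazur⟩ := exists_mazur_image hp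
  refine ⟨K * 2 ^ θ, θ, hθ, fun D _ F hF0 hF2 => ?_⟩
  obtain ⟨w, hw0, hw2, hwσ⟩ := exists_real_of_complex F hF0 hF2
  obtain ⟨y, hy0, hyp, hyσ⟩ := mazur D w hw0 hw2
  refine ⟨y, hy0, hyp, fun σ => (hyσ σ).trans ?_⟩
  rw [mul_assoc, ← Real.mul_rpow zero_le_two (by positivity)]
  gcongr
  exact hwσ σ

lemma dualPair_single (p : ℝ≥0∞) (φ : ℕ → ℂ) (m : ℕ) : dualPair φ (lp.single p m 1) = φ m := by
  simp [dualPair, lp.single_apply, Pi.single_apply]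

section PermutationRepresentation

variable {p : ℝ≥0∞} [Fact (1 ≤ p)]

def lpCompPerm {X : Type*} (hp : 0 < p.toReal) (σ : Equiv.Perm X) :
    lp (fun _ : X => ℂ) p ≃ₗᵢ[ℂ] lp (fun _ : X => ℂ) p where
  toFun f := ⟨fun x => f (σ x), show Memℓp _ p by
    simpa using (lp.memℓp f).twist σ (fun _ => norm_one)⟩
  invFun f := ⟨fun x => f (σ.symm x), show Memℓp _ p by
    simpa using (lp.memℓp f).twist σ.symm (fun _ => norm_one)⟩
  map_add' _ _ := rfl
  map_smul' _ _ := rfl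
  left_inv f := lp.ext <| funext fun x => congrArg f (σ.apply_symm_apply x)
  right_inv f := lp.ext <| funext fun x => congrArg f (σ.symm_apply_apply x)
  norm_map' f := by
    rw [← Real.rpow_left_inj (norm_nonneg _) (norm_nonneg _) hp.ne', lp.norm_rpow_eq_tsum hp,
      lp.norm_rpow_eq_tsum hp]
    exact σ.tsum_eq fun x => ‖f x‖ ^ p.toReal

variable {G : Type*} [Group G] [TopologicalSpace G] [DiscreteTopology G] [MulAction G ℕ]

def permRep (hp : 0 < p.toReal) : OrthRep G p where
  toFun :=
    { toFun g := lpCompPerm hp (MulAction.toPerm g⁻¹)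
      map_one' := by ext; simp [lpCompPerm]
      map_mul' g h := by ext; simp [lpCompPerm, mul_smul] }
  continuous_apply _ := continuous_of_discreteTopology

@[simp]
lemma permRep_apply (hp : 0 < p.toReal) (g : G) (f : lp (fun _ : ℕ => ℂ) p) (m : ℕ) :
    (permRep hp).toFun g f m = f (g⁻¹ • m) := rfl

lemma permRep_single (hp : 0 < p.toReal) (g : G) (m : ℕ) :
    (permRep hp).toFun g (lp.single p m 1) = lp.single p (g • m) 1 := by
  ext k
  simp [lp.single_apply, Pi.single_apply, inv_smul_eq_iff]

lemma apply_smul_of_dualInvariant {hp : 0 < p.toReal} {φ : ℕ → ℂ}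
    (hφ : (permRep (G := G) hp).DualInvariant φ) (g : G) (m : ℕ) : φ (g • m) = φ m := by
  simpa [permRep_single, dualPair_single] using hφ.2 g (lp.single p m 1)

end PermutationRepresentation

section ExtendByZero

variable {p : ℝ≥0∞} {D : Type*} [Fintype D]

def extendLp (p : ℝ≥0∞) (ι : D → ℕ) (u : D → ℂ) : lp (fun _ : ℕ => ℂ) p :=
  ⟨extend ι u (0 : ℕ → ℂ), show Memℓp _ p from
    (memℓp_zero <| (Set.finite_range ι).subset fun m hm => by_contra fun h =>
      hm (extend_apply' u (0 : ℕ → ℂ) m h)).of_exponent_ge zero_le⟩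

lemma extendLp_apply (ι : D → ℕ) (u : D → ℂ) (m : ℕ) : extendLp p ι u m = extend ι u 0 m := rfl

lemma tsum_extend_zero_apply {M : Type*} [AddCommMonoid M] [TopologicalSpace M]
    {ι : D → ℕ} (hι : Injective ι) (u : D → ℂ) (F : ℕ → ℂ → M) (hF : ∀ m, F m 0 = 0) :
    ∑' m, F m (extend ι u 0 m) = ∑ d, F (ι d) (u d) := by
  have hext : (fun m => F m (extend ι u 0 m)) = extend ι (fun d => F (ι d) (u d)) 0 := by
    funext m
    by_cases hm : ∃ d, ι d = m
    · obtain ⟨d, rfl⟩ := hm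
      simp [hι.extend_apply]
    · simp [extend_apply' _ _ _ hm, hF]
  rw [hext, tsum_extend_zero hι, tsum_fintype]

lemma norm_extendLp_rpow [Fact (1 ≤ p)] (hp : 0 < p.toReal) {ι : D → ℕ} (hι : Injective ι)
    (u : D → ℂ) : ‖extendLp p ι u‖ ^ p.toReal = ∑ d, ‖u d‖ ^ p.toReal := by
  rw [lp.norm_rpow_eq_tsum hp]
  exact tsum_extend_zero_apply hι u (fun _ z => ‖z‖ ^ p.toReal) fun _ => by
    simp [Real.zero_rpow hp.ne']

lemma dualPair_extendLp {ι : D → ℕ} (hι : Injective ι) (u : D → ℂ) (φ : ℕ → ℂ) :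
    dualPair φ (extendLp p ι u) = ∑ d, φ (ι d) * u d :=
  tsum_extend_zero_apply hι u (fun m z => φ m * z) fun _ => mul_zero _

lemma extendLp_sub [Fact (1 ≤ p)] (ι : D → ℕ) (u v : D → ℂ) :
    extendLp p ι u - extendLp p ι v = extendLp p ι (u - v) := by
  ext m
  rw [lp.coeFn_sub, Pi.sub_apply, extendLp_apply, extendLp_apply, extendLp_apply,
    ← Pi.sub_apply, ← extend_sub, sub_zero]

variable {G : Type*} [Group G] [TopologicalSpace G] [DiscreteTopology G] [MulAction G ℕ]
  [MulAction G D] [Fact (1 ≤ p)]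

lemma permRep_extendLp (hp : 0 < p.toReal) {ι : D →[G] ℕ} (hι : Injective ι) (g : G)
    (u : D → ℂ) :
    (permRep hp).toFun g (extendLp p ι u) = extendLp p ι (fun d => u (g⁻¹ • d)) := by
  ext m
  rw [permRep_apply, extendLp_apply, extendLp_apply]
  by_cases hm : ∃ d, ι d = m
  · obtain ⟨d, rfl⟩ := hm
    rw [← map_smul, hι.extend_apply, hι.extend_apply]
  · have hm' : ¬∃ d, ι d = g⁻¹ • m := fun ⟨d, hd⟩ =>
      hm ⟨g • d, by rw [map_smul, hd, smul_inv_smul]⟩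
    rw [extend_apply' _ _ _ hm, extend_apply' _ _ _ hm']
    rfl

lemma extendLp_mem_ann [MulAction.IsPretransitive G D] (hp : 0 < p.toReal) {ι : D →[G] ℕ}
    (hι : Injective ι) {u : D → ℂ} (hu : ∑ d, u d = 0) :
    extendLp p ι u ∈ (permRep (G := G) hp).ann := by
  intro φ hφ
  rw [dualPair_extendLp hι]
  rcases isEmpty_or_nonempty D with hD | ⟨⟨d₀⟩⟩
  · simp
  have hconst : ∀ d, φ (ι d) = φ (ι d₀) := fun d => by
    obtain ⟨g, rfl⟩ := MulAction.exists_smul_eq G d₀ d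
    rw [map_smul, apply_smul_of_dualInvariant hφ]
  simp [hconst, ← mul_sum, hu]

end ExtendByZero

lemma OrthRep.hasAlmostInvariantSeq_of_tendsto {G : Type*} [Group G] [TopologicalSpace G]
    [DiscreteTopology G] {p : ℝ≥0∞} [Fact (1 ≤ p)] (π : OrthRep G p)
    {S : Set (lp (fun _ : ℕ => ℂ) p)} (f : ℕ → lp (fun _ : ℕ => ℂ) p) (hS : ∀ n, f n ∈ S)
    (hf : ∀ n, ‖f n‖ = 1) (h : ∀ g, Tendsto (fun n => ‖π.toFun g (f n) - f n‖) atTop (𝓝 0)) :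
    π.HasAlmostInvariantSeq S := by
  refine ⟨f, hS, hf, fun Q hQ ε hε => ?_⟩
  have hev : ∀ᶠ n in atTop, ∀ g ∈ Q, ‖π.toFun g (f n) - f n‖ < ε :=
    hQ.finite_of_discrete.eventually_all.2 fun g _ => (h g).eventually (gt_mem_nhds hε)
  obtain ⟨N, hN⟩ := eventually_atTop.1 hev
  exact ⟨N, hN⟩

theorem not_hasPropertyTlp_of_tendsto {Γ : Type*} [Group Γ] [TopologicalSpace Γ]
    [DiscreteTopology Γ] {p : ℝ} (hp : 1 ≤ p) (H : ℕ → Subgroup Γ) [∀ n, Fintype (Γ ⧸ H n)]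
    (y : ∀ n, Γ ⧸ H n → ℂ) (hy0 : ∀ n, ∑ d, y n d = 0) (hy1 : ∀ n, ∑ d, ‖y n d‖ ^ p = 1)
    (hy : ∀ g : Γ, Tendsto (fun n => ∑ d, ‖y n (g⁻¹ • d) - y n d‖ ^ p) atTop (𝓝 0)) :
    ¬HasPropertyTlp Γ p := by
  intro hT
  have : Fact (1 ≤ ENNReal.ofReal p) := ⟨ENNReal.one_le_ofReal.2 hp⟩
  have hpr : (ENNReal.ofReal p).toReal = p := ENNReal.toReal_ofReal (zero_le_one.trans hp)
  have hp0 : 0 < (ENNReal.ofReal p).toReal := by rw [hpr]; linarith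
  have : Infinite (Σ n, Γ ⧸ H n) :=
    Infinite.of_injective (fun n => ⟨n, (1 : Γ)⟩) fun _ _ h => congrArg Sigma.fst h
  obtain ⟨e⟩ : Nonempty (ℕ ≃ Σ n, Γ ⧸ H n) := nonempty_equiv_of_countable
  -- extended by zero to `Σ n, Γ ⧸ H n ≃ ℕ`, the `y n` lie in `ℓ'_p` because dual invariant
  -- vectors are constant on the orbits `Γ ⧸ H n`
  let : MulAction Γ ℕ := e.mulAction Γ
  let ι n : Γ ⧸ H n →[Γ] ℕ :=
    { toFun d := e.symm ⟨n, d⟩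
      map_smul' g d := by simp [Equiv.smul_def] }
  have hι n : Injective (ι n) := e.symm.injective.comp sigma_mk_injective
  have norm_eq n (u : Γ ⧸ H n → ℂ) :
      ‖extendLp (ENNReal.ofReal p) (ι n) u‖ = (∑ d, ‖u d‖ ^ p) ^ p⁻¹ := by
    rw [← Real.rpow_rpow_inv (norm_nonneg (extendLp _ _ u)) hp0.ne', norm_extendLp_rpow hp0 (hι n),
      hpr]
  refine hT (permRep hp0) ((permRep hp0).hasAlmostInvariantSeq_of_tendsto
    (fun n => extendLp _ (ι n) (y n)) (fun n => extendLp_mem_ann hp0 (hι n) (hy0 n))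
    (fun n => by rw [norm_eq, hy1, Real.one_rpow]) fun g => ?_)
  simp only [permRep_extendLp hp0 (hι _), extendLp_sub, norm_eq, Pi.sub_apply]
  simpa [Real.zero_rpow (inv_pos.2 (zero_lt_one.trans_le hp)).ne'] using
    (hy g).rpow_const (Or.inr (inv_nonneg.2 (zero_le_one.trans hp)))

theorem exists_almostInvariant_lp_of_not_propertyTau {Γ : Type*} [Group Γ] [Countable Γ]
    (h : ¬PropertyTau Γ) :
    ∃ (H : ℕ → Subgroup Γ) (F : ∀ n, lp (fun _ : Γ ⧸ H n => ℂ) 2), (∀ n, (H n).FiniteIndex) ∧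
      (∀ n, F n ≠ 0) ∧
      (∀ n, ∀ f₀ : lp (fun _ : Γ ⧸ H n => ℂ) 2, (∀ x y, f₀ x = f₀ y) → inner ℂ f₀ (F n) = (0 : ℂ)) ∧
      ∀ g : Γ, Tendsto (fun n => ‖permL2 g (F n) - F n‖ / ‖F n‖) atTop (𝓝 0) := by
  classical
  obtain ⟨e, he⟩ := exists_surjective_nat Γ
  simp only [PropertyTau, not_exists, not_and, not_forall, not_le, exists_prop] at h
  choose H hH F hF hsmall using fun n : ℕ =>
    h ((range (n + 1)).image e) (n + 1 : ℝ)⁻¹ (by positivity)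
  have hF0 n : 0 < ‖F n‖ := by
    have := hsmall n (e 0) (mem_image_of_mem e (mem_range.2 n.succ_pos))
    exact pos_of_mul_pos_right ((norm_nonneg _).trans_lt this) (by positivity)
  refine ⟨H, F, hH, fun n => norm_pos_iff.1 (hF0 n), hF, fun g => ?_⟩
  obtain ⟨k, rfl⟩ := he g
  refine squeeze_zero' (.of_forall fun n => by positivity) ?_
    tendsto_one_div_add_atTop_nhds_zero_nat
  filter_upwards [eventually_ge_atTop k] with n hn
  rw [div_le_iff₀ (hF0 n), one_div]
  exact (hsmall n _ (mem_image_of_mem e (mem_range.2 (by omega)))).le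

lemma permL2_apply {G X : Type*} [Group G] [MulAction G X] (g : G) (f : lp (fun _ : X => ℂ) 2)
    (x : X) : permL2 g f x = f (g⁻¹ • x) :=
  one_mul _

section FiniteL2

variable {X : Type*} [Fintype X]

lemma norm_rpow_two_eq_sum (f : lp (fun _ : X => ℂ) 2) :
    ‖f‖ ^ (2 : ℝ) = ∑ x, ‖f x‖ ^ (2 : ℝ) := by
  simpa [tsum_fintype] using lp.norm_rpow_eq_tsum (p := 2) (by norm_num) f

lemma sum_norm_div_norm_rpow_two (f : lp (fun _ : X => ℂ) 2) (u : X → ℂ) :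
    ∑ x, ‖u x / ‖f‖‖ ^ (2 : ℝ) = (∑ x, ‖u x‖ ^ (2 : ℝ)) / ‖f‖ ^ (2 : ℝ) := by
  simp only [norm_div, Complex.norm_real, norm_norm,
    Real.div_rpow (norm_nonneg _) (norm_nonneg _), sum_div]

lemma sum_eq_zero_of_forall_inner_const {f : lp (fun _ : X => ℂ) 2}
    (hf : ∀ f₀ : lp (fun _ : X => ℂ) 2, (∀ x y, f₀ x = f₀ y) → inner ℂ f₀ f = (0 : ℂ)) :
    ∑ x, f x = 0 := by
  simpa [lp.inner_eq_tsum, tsum_fintype] using hf ⟨fun _ => 1, Memℓp.all _⟩ fun _ _ => rfl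

end FiniteL2

theorem exists_almostInvariant_of_not_propertyTau {Γ : Type*} [Group Γ] [Countable Γ]
    (h : ¬PropertyTau Γ) :
    ∃ (H : ℕ → Subgroup Γ) (_ : ∀ n, Fintype (Γ ⧸ H n)) (f : ∀ n, Γ ⧸ H n → ℂ),
      (∀ n, ∑ d, f n d = 0) ∧ (∀ n, ∑ d, ‖f n d‖ ^ (2 : ℝ) = 1) ∧
      ∀ g : Γ, Tendsto (fun n => ∑ d, ‖f n (g⁻¹ • d) - f n d‖ ^ (2 : ℝ)) atTop (𝓝 0) := by
  obtain ⟨H, F, hH, hF0, hFc, hF⟩ := exists_almostInvariant_lp_of_not_propertyTau h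
  have : ∀ n, Fintype (Γ ⧸ H n) := fun n => have := hH n; Fintype.ofFinite _
  refine ⟨H, this, fun n d => F n d / ‖F n‖, fun n => ?_, fun n => ?_, fun g => ?_⟩
  · rw [← sum_div, sum_eq_zero_of_forall_inner_const (hFc n), zero_div]
  · rw [sum_norm_div_norm_rpow_two, ← norm_rpow_two_eq_sum,
      div_self (Real.rpow_pos_of_pos (norm_pos_iff.2 (hF0 n)) _).ne']
  have hlim := (hF g).rpow_const (p := 2) (Or.inr zero_le_two)
  rw [Real.zero_rpow two_ne_zero] at hlim
  refine hlim.congr fun n => ?_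
  simp only [← sub_div, sum_norm_div_norm_rpow_two, Real.div_rpow (norm_nonneg _) (norm_nonneg _)]
  congr 1
  simp only [norm_rpow_two_eq_sum, lp.coeFn_sub, Pi.sub_apply, permL2_apply]

theorem propertyTau_of_propertyTlp_general
    (Γ : Type*) [Group Γ] [Countable Γ] [TopologicalSpace Γ] [DiscreteTopology Γ]
    (p : ℝ) (hp1 : 1 < p) (hT : HasPropertyTlp Γ p) :
    PropertyTau Γ := by
  by_contra hτ
  obtain ⟨H, _, f, hf0, hf2, hf⟩ := exists_almostInvariant_of_not_propertyTau hτ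
  obtain ⟨K, θ, hθ, mazur⟩ := exists_mazur_image_of_complex hp1
  choose y hy0 hyp hyσ using fun n => mazur (Γ ⧸ H n) (f n) (hf0 n) (hf2 n)
  refine not_hasPropertyTlp_of_tendsto hp1.le H (fun n d => y n d) (fun n => ?_) (fun n => ?_)
    (fun g => ?_) hT
  · rw [← Complex.ofReal_sum, hy0, Complex.ofReal_zero]
  · simpa only [Complex.norm_real, Real.norm_eq_abs] using hyp n
  · have hlim := ((hf g).rpow_const (Or.inr hθ.le)).const_mul K
    rw [Real.zero_rpow hθ.ne', mul_zero] at hlim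
    refine squeeze_zero (fun n => by positivity) (fun n => ?_) hlim
    simpa only [← Complex.ofReal_sub, Complex.norm_real, Real.norm_eq_abs,
      MulAction.toPerm_apply] using hyσ n (MulAction.toPerm g⁻¹)

/-- A countable discrete group with Property `(T_{ℓ_p})` for some
`1 < p < ∞`, `p ≠ 2`, has Lubotzky's Property `(τ)`. -/
theorem propertyTau_of_propertyTlp
    (Γ : Type*) [Group Γ] [Countable Γ] [TopologicalSpace Γ] [DiscreteTopology Γ]
    (p : ℝ) (hp1 : 1 < p) (hp2 : p ≠ 2) (hT : HasPropertyTlp Γ p) :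
    PropertyTau Γ :=
  propertyTau_of_propertyTlp_general Γ p hp1 hT
end
end

section
/- Let X be a countable set and let 1 ≤ p < ∞ with p ≠ 2. For every surjective linear isometry U of the complex Banach space ℓ_p(X) there exist a unique permutation σ of X and a unique function h: X → S¹ such that (Uf)(x) = h(x) f(σ(x)) for all f ∈ ℓ_p(X) and all x ∈ X. -/
/-!
For `p ≠ 2` the `p`-th power parallelogram identity
`‖a + b‖ ^ p + ‖a - b‖ ^ p = 2 * (‖a‖ ^ p + ‖b‖ ^ p)` holds in an inner product space exactly when
`a = 0` or `b = 0`: Jensen's inequality for `t ↦ t ^ (p / 2)` at `‖a ± b‖ ^ 2`, whose mean is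
`‖a‖ ^ 2 + ‖b‖ ^ 2` by the parallelogram law, followed by strict sub- or superadditivity of that
power. Summing over coordinates, the identity holds in `ℓ_p` exactly when `f` and `g` have
disjoint supports, and since an isometry preserves it, a surjective isometry `U` and its inverse
preserve disjointness of supports. Hence the images `U e_x` of the unit vectors have pairwise
disjoint supports, and each is supported at a single point `y` (two points would force the
disjoint vectors `U⁻¹ e_y`, `U⁻¹ e_y'` to be both nonzero at `x`). This gives the permutation;
expanding `f = ∑ f x • e_x` gives the formula, and `‖U e_x‖ = 1` makes the weight unimodular.
-/

open scoped ENNReal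

namespace Real

theorem rpow_add_lt_add_rpow {x y s : ℝ} (hx : 0 < x) (hy : 0 < y) (hs : s < 1) :
    (x + y) ^ s < x ^ s + y ^ s := by
  have hxy : 0 < x + y := add_pos hx hy
  have key {z : ℝ} (hz : 0 < z) (hzs : z < x + y) : z * (x + y) ^ (s - 1) < z ^ s := by
    have := mul_lt_mul_of_pos_left (rpow_lt_rpow_of_neg hz hzs (by linarith : s - 1 < 0)) hz
    rwa [mul_comm z (z ^ (s - 1)), ← rpow_add_one hz.ne', sub_add_cancel] at this
  calc (x + y) ^ s = x * (x + y) ^ (s - 1) + y * (x + y) ^ (s - 1) := by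
        rw [← add_mul, mul_comm, ← rpow_add_one hxy.ne', sub_add_cancel]
    _ < x ^ s + y ^ s := add_lt_add (key hx (by linarith)) (key hy (by linarith))

theorem add_rpow_lt_rpow_add {x y s : ℝ} (hx : 0 < x) (hy : 0 < y) (hs : 1 < s) :
    x ^ s + y ^ s < (x + y) ^ s := by
  have hxy : 0 < x + y := add_pos hx hy
  have key {z : ℝ} (hz : 0 < z) (hzs : z < x + y) : z ^ s < z * (x + y) ^ (s - 1) := by
    have := mul_lt_mul_of_pos_left (rpow_lt_rpow hz.le hzs (by linarith : 0 < s - 1)) hz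
    rwa [mul_comm z (z ^ (s - 1)), ← rpow_add_one hz.ne', sub_add_cancel] at this
  calc x ^ s + y ^ s < x * (x + y) ^ (s - 1) + y * (x + y) ^ (s - 1) :=
        add_lt_add (key hx (by linarith)) (key hy (by linarith))
    _ = (x + y) ^ s := by rw [← add_mul, mul_comm, ← rpow_add_one hxy.ne', sub_add_cancel]

theorem sq_rpow_div_two {x : ℝ} (hx : 0 ≤ x) (p : ℝ) : (x ^ 2) ^ (p / 2) = x ^ p := by
  rw [← rpow_natCast, ← rpow_mul hx]
  congr 1
  ring

end Real

noncomputable def parallelogramDefect {E : Type*} [SeminormedAddCommGroup E] (p : ℝ) (a b : E) :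
    ℝ :=
  2 * (‖a‖ ^ p + ‖b‖ ^ p) - (‖a + b‖ ^ p + ‖a - b‖ ^ p)

theorem parallelogramDefect_eq_zero_of_eq_zero_or {E : Type*} [SeminormedAddCommGroup E]
    {p : ℝ} (hp : 0 < p) {a b : E} (h : a = 0 ∨ b = 0) : parallelogramDefect p a b = 0 := by
  rcases h with rfl | rfl <;>
    simp [parallelogramDefect, Real.zero_rpow hp.ne'] <;> ring

theorem LinearIsometry.parallelogramDefect_map {R E F : Type*} [Semiring R]
    [SeminormedAddCommGroup E] [SeminormedAddCommGroup F] [Module R E] [Module R F]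
    (U : E →ₗᵢ[R] F) (p : ℝ) (a b : E) :
    parallelogramDefect p (U a) (U b) = parallelogramDefect p a b := by
  simp only [parallelogramDefect, ← map_add, ← map_sub, U.norm_map]

section InnerProductSpace

variable {E : Type*} [NormedAddCommGroup E] [InnerProductSpace ℝ E] {p : ℝ}

theorem parallelogramDefect_pos (hp0 : 0 < p) (hp : p < 2) {a b : E} (ha : a ≠ 0) (hb : b ≠ 0) :
    0 < parallelogramDefect p a b := by
  have hmean : 1 / 2 * ‖a + b‖ ^ 2 + 1 / 2 * ‖a - b‖ ^ 2 = ‖a‖ ^ 2 + ‖b‖ ^ 2 := by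
    linarith [parallelogram_law_with_norm ℝ a b]
  have hjensen := (Real.concaveOn_rpow (p := p / 2) (by positivity) (by linarith)).2
    (Set.mem_Ici.2 (sq_nonneg ‖a + b‖)) (Set.mem_Ici.2 (sq_nonneg ‖a - b‖))
    (by norm_num : (0 : ℝ) ≤ 1 / 2) (by norm_num : (0 : ℝ) ≤ 1 / 2) (by norm_num)
  simp only [smul_eq_mul, hmean] at hjensen
  have hsub := Real.rpow_add_lt_add_rpow (s := p / 2) (pow_pos (norm_pos_iff.2 ha) 2)
    (pow_pos (norm_pos_iff.2 hb) 2) (by linarith)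
  simp only [parallelogramDefect, ← Real.sq_rpow_div_two (norm_nonneg _) p]
  linarith

theorem parallelogramDefect_neg (hp : 2 < p) {a b : E} (ha : a ≠ 0) (hb : b ≠ 0) :
    parallelogramDefect p a b < 0 := by
  have hmean : 1 / 2 * ‖a + b‖ ^ 2 + 1 / 2 * ‖a - b‖ ^ 2 = ‖a‖ ^ 2 + ‖b‖ ^ 2 := by
    linarith [parallelogram_law_with_norm ℝ a b]
  have hjensen := (convexOn_rpow (p := p / 2) (by linarith)).2
    (Set.mem_Ici.2 (sq_nonneg ‖a + b‖)) (Set.mem_Ici.2 (sq_nonneg ‖a - b‖))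
    (by norm_num : (0 : ℝ) ≤ 1 / 2) (by norm_num : (0 : ℝ) ≤ 1 / 2) (by norm_num)
  simp only [smul_eq_mul, hmean] at hjensen
  have hsup := Real.add_rpow_lt_rpow_add (s := p / 2) (pow_pos (norm_pos_iff.2 ha) 2)
    (pow_pos (norm_pos_iff.2 hb) 2) (by linarith)
  simp only [parallelogramDefect, ← Real.sq_rpow_div_two (norm_nonneg _) p]
  linarith

theorem parallelogramDefect_eq_zero_iff (hp0 : 0 < p) (hp2 : p ≠ 2) {a b : E} :
    parallelogramDefect p a b = 0 ↔ a = 0 ∨ b = 0 := by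
  refine ⟨fun h => ?_, parallelogramDefect_eq_zero_of_eq_zero_or hp0⟩
  by_contra! hab
  rcases hp2.lt_or_gt with hp | hp
  · exact (parallelogramDefect_pos hp0 hp hab.1 hab.2).ne' h
  · exact (parallelogramDefect_neg hp hab.1 hab.2).ne h

theorem sub_mul_parallelogramDefect_nonneg (hp0 : 0 < p) (a b : E) :
    0 ≤ (2 - p) * parallelogramDefect p a b := by
  by_cases hab : a = 0 ∨ b = 0
  · simp [parallelogramDefect_eq_zero_of_eq_zero_or hp0 hab]
  rw [not_or] at hab
  rcases lt_trichotomy p 2 with hp | rfl | hp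
  · exact mul_nonneg (by linarith) (parallelogramDefect_pos hp0 hp hab.1 hab.2).le
  · simp
  · exact mul_nonneg_of_nonpos_of_nonpos (by linarith) (parallelogramDefect_neg hp hab.1 hab.2).le

end InnerProductSpace

namespace lp

section

variable {X E : Type*} [NormedAddCommGroup E] {p : ℝ≥0∞} [Fact (1 ≤ p)]

theorem hasSum_parallelogramDefect (hp : p ≠ ∞) (f g : lp (fun _ : X => E) p) :
    HasSum (fun x => parallelogramDefect p.toReal (f x) (g x))
      (parallelogramDefect p.toReal f g) := by
  have hp0 : 0 < p.toReal := ENNReal.toReal_pos (zero_lt_one.trans_le Fact.out).ne' hp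
  have hsum (h : lp (fun _ : X => E) p) := hasSum_norm hp0 h
  have := ((hsum f).add (hsum g)).mul_left 2 |>.sub ((hsum (f + g)).add (hsum (f - g)))
  simpa only [parallelogramDefect, coeFn_add, coeFn_sub, Pi.add_apply, Pi.sub_apply] using this

variable [InnerProductSpace ℝ E]

theorem disjoint_iff_parallelogramDefect_eq_zero (hp : p ≠ ∞) (hp2 : p ≠ 2)
    (f g : lp (fun _ : X => E) p) :
    (∀ x, f x = 0 ∨ g x = 0) ↔ parallelogramDefect p.toReal f g = 0 := by
  set q := p.toReal
  have hq0 : 0 < q := ENNReal.toReal_pos (zero_lt_one.trans_le Fact.out).ne' hp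
  have hq2 : q ≠ 2 := fun h => hp2 ((ENNReal.toReal_eq_toReal_iff' hp (by simp)).1 (by simpa))
  have hsum := (hasSum_parallelogramDefect hp f g).mul_left (2 - q)
  calc (∀ x, f x = 0 ∨ g x = 0)
      ↔ (fun x => (2 - q) * parallelogramDefect q (f x) (g x)) = 0 := by
        simp [funext_iff, sub_eq_zero, hq2.symm, parallelogramDefect_eq_zero_iff hq0 hq2]
    _ ↔ HasSum (fun x => (2 - q) * parallelogramDefect q (f x) (g x)) 0 :=
        (hasSum_zero_iff_of_nonneg fun x => sub_mul_parallelogramDefect_nonneg hq0 _ _).symm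
    _ ↔ (2 - q) * parallelogramDefect q f g = 0 := ⟨fun h => (h.unique hsum).symm, (· ▸ hsum)⟩
    _ ↔ parallelogramDefect q f g = 0 := by simp [sub_eq_zero, hq2.symm]

end

variable {𝕜 X Y : Type*} [RCLike 𝕜] {p : ℝ≥0∞}

theorem apply_eq_zero_or_of_disjoint [Fact (1 ≤ p)] (hp : p ≠ ∞) (hp2 : p ≠ 2)
    (U : lp (fun _ : X => 𝕜) p ≃ₗᵢ[𝕜] lp (fun _ : Y => 𝕜) p) {f g : lp (fun _ : X => 𝕜) p}
    (hfg : ∀ x, f x = 0 ∨ g x = 0) (y : Y) : U f y = 0 ∨ U g y = 0 := by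
  rw [disjoint_iff_parallelogramDefect_eq_zero hp hp2,
    ← U.toLinearIsometry.parallelogramDefect_map] at hfg
  exact (disjoint_iff_parallelogramDefect_eq_zero hp hp2 _ _).2 hfg y

variable [DecidableEq X]

theorem single_apply_eq_zero_or {x x' : X} (h : x ≠ x') (a b : 𝕜) (z : X) :
    lp.single (E := fun _ => 𝕜) p x a z = 0 ∨ lp.single (E := fun _ => 𝕜) p x' b z = 0 := by
  by_cases hz : z = x
  · exact .inr (lp.single_apply_ne p x' _ (hz ▸ h))
  · exact .inl (lp.single_apply_ne p x _ hz)

theorem eq_of_forall_mul_apply_comp_eq {σ σ' : Y → X} {h h' : Y → 𝕜} (hh : ∀ y, h y ≠ 0)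
    (H : ∀ (f : lp (fun _ : X => 𝕜) p) y, h y * f (σ y) = h' y * f (σ' y)) :
    σ = σ' ∧ h = h' := by
  have hσ (y : Y) : σ' y = σ y := by
    by_contra hne
    have := H (lp.single p (σ y) 1) y
    rw [lp.single_apply_self, lp.single_apply_ne p _ _ hne, mul_one, mul_zero] at this
    exact hh y this
  refine ⟨funext fun y => (hσ y).symm, funext fun y => ?_⟩
  simpa [hσ y] using H (lp.single p (σ y) 1) y

variable [Fact (1 ≤ p)] (U : lp (fun _ : X => 𝕜) p ≃ₗᵢ[𝕜] lp (fun _ : Y => 𝕜) p)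

theorem hasSum_mul_apply_single (hp : p ≠ ∞) (f : lp (fun _ : X => 𝕜) p) (y : Y) :
    HasSum (fun x => f x * U (lp.single p x 1) y) (U f y) := by
  have hf : HasSum (fun x => f x • lp.single p x (1 : 𝕜)) f := by
    simpa only [← lp.single_smul, smul_eq_mul, mul_one] using lp.hasSum_single hp f
  have := (lp.evalCLM 𝕜 (fun _ : Y => 𝕜) p y ∘L (U : _ →L[𝕜] _)).hasSum hf
  simp only [ContinuousLinearMap.comp_apply, map_smul, smul_eq_mul] at this
  exact this

theorem exists_apply_ne_zero (x : X) : ∃ y, U (lp.single p x 1) y ≠ 0 := by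
  by_contra! h
  have := congrArg (fun g : lp (fun _ : X => 𝕜) p => g x) (U.map_eq_zero_iff.1 (lp.ext (funext h)))
  simp at this

theorem apply_eq_mul_of_apply_single_ne_zero (hp : p ≠ ∞) (hp2 : p ≠ 2) {x : X} {y : Y}
    (hxy : U (lp.single p x 1) y ≠ 0) (f : lp (fun _ : X => 𝕜) p) :
    U f y = f x * U (lp.single p x 1) y := by
  refine (hasSum_mul_apply_single U hp f y).unique (hasSum_single x fun x' hx' => ?_)
  rcases apply_eq_zero_or_of_disjoint hp hp2 U (single_apply_eq_zero_or hx' 1 1) y with h | h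
  · rw [h, mul_zero]
  · exact absurd h hxy

variable [DecidableEq Y]

theorem exists_apply_single_ne_zero (hp : p ≠ ∞) (y : Y) : ∃ x, U (lp.single p x 1) y ≠ 0 := by
  by_contra! h
  have := (hasSum_mul_apply_single U hp (U.symm (lp.single p y 1)) y).unique
    (by simpa only [h, mul_zero] using hasSum_zero)
  simp at this

theorem subsingleton_support_apply_single (hp : p ≠ ∞) (hp2 : p ≠ 2) (x : X) :
    (Function.support ⇑(U (lp.single p x 1))).Subsingleton := by
  intro y hy y' hy'
  by_contra hne
  have hsymm {z : Y} (hz : U (lp.single p x 1) z ≠ 0) : U.symm (lp.single p z 1) x ≠ 0 := by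
    have := apply_eq_mul_of_apply_single_ne_zero U hp hp2 hz (U.symm (lp.single p z 1))
    rw [U.apply_symm_apply, lp.single_apply_self] at this
    exact left_ne_zero_of_mul (this ▸ one_ne_zero)
  rcases apply_eq_zero_or_of_disjoint hp hp2 U.symm (single_apply_eq_zero_or hne 1 1) x with h | h
  exacts [hsymm hy h, hsymm hy' h]

noncomputable def indexEquiv (hp : p ≠ ∞) (hp2 : p ≠ 2) : Y ≃ X where
  toFun y := (exists_apply_single_ne_zero U hp y).choose
  invFun x := (exists_apply_ne_zero U x).choose
  left_inv y := subsingleton_support_apply_single U hp hp2 _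
    (exists_apply_ne_zero U _).choose_spec (exists_apply_single_ne_zero U hp y).choose_spec
  right_inv x := by
    by_contra hne
    rcases apply_eq_zero_or_of_disjoint hp hp2 U (single_apply_eq_zero_or hne 1 1)
      (exists_apply_ne_zero U x).choose with h | h
    exacts [(exists_apply_single_ne_zero U hp _).choose_spec h,
      (exists_apply_ne_zero U x).choose_spec h]

theorem apply_single_indexEquiv_ne_zero (hp : p ≠ ∞) (hp2 : p ≠ 2) (y : Y) :
    U (lp.single p (indexEquiv U hp hp2 y) 1) y ≠ 0 :=
  (exists_apply_single_ne_zero U hp y).choose_spec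

theorem apply_eq_mul_apply_indexEquiv (hp : p ≠ ∞) (hp2 : p ≠ 2) (f : lp (fun _ : X => 𝕜) p)
    (y : Y) :
    U f y = U (lp.single p (indexEquiv U hp hp2 y) 1) y * f (indexEquiv U hp hp2 y) := by
  rw [apply_eq_mul_of_apply_single_ne_zero U hp hp2 (apply_single_indexEquiv_ne_zero U hp hp2 y),
    mul_comm]

theorem map_single_indexEquiv (hp : p ≠ ∞) (hp2 : p ≠ 2) (y : Y) :
    U (lp.single p (indexEquiv U hp hp2 y) 1) =
      lp.single p y (U (lp.single p (indexEquiv U hp hp2 y) 1) y) := by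
  ext y'
  by_cases hy' : y' = y
  · rw [hy', lp.single_apply_self]
  · rw [lp.single_apply_ne p y _ hy']
    by_contra h
    exact hy' (subsingleton_support_apply_single U hp hp2 _ h
      (apply_single_indexEquiv_ne_zero U hp hp2 y))

theorem norm_apply_single_indexEquiv (hp : p ≠ ∞) (hp2 : p ≠ 2) (y : Y) :
    ‖U (lp.single p (indexEquiv U hp hp2 y) 1) y‖ = 1 := by
  have hp0 : 0 < p := zero_lt_one.trans_le Fact.out
  have := U.norm_map (lp.single p (indexEquiv U hp hp2 y) 1)
  rwa [map_single_indexEquiv, lp.norm_single hp0, lp.norm_single hp0, norm_one] at this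

end lp

theorem surjective_isometry_lp_eq_twisted_permutation_general
    (X : Type*) (p : ℝ) (hp2 : p ≠ 2)
    [Fact (1 ≤ ENNReal.ofReal p)]
    (U : lp (fun _ : X => ℂ) (ENNReal.ofReal p) ≃ₗᵢ[ℂ]
      lp (fun _ : X => ℂ) (ENNReal.ofReal p)) :
    ∃! σh : Equiv.Perm X × (X → ℂ),
      (∀ x : X, ‖σh.2 x‖ = 1) ∧
      ∀ (f : lp (fun _ : X => ℂ) (ENNReal.ofReal p)) (x : X),
        (U f) x = σh.2 x * f (σh.1 x) := by
  classical
  have hP : ENNReal.ofReal p ≠ ∞ := ENNReal.ofReal_ne_top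
  have hP2 : ENNReal.ofReal p ≠ 2 := by simpa using hp2
  refine ⟨(lp.indexEquiv U hP hP2, fun x => U (lp.single _ (lp.indexEquiv U hP hP2 x) 1) x),
    ⟨lp.norm_apply_single_indexEquiv U hP hP2, lp.apply_eq_mul_apply_indexEquiv U hP hP2⟩, ?_⟩
  rintro ⟨σ, h⟩ ⟨-, hU⟩
  obtain ⟨hσ, hh⟩ := lp.eq_of_forall_mul_apply_comp_eq
    (fun x => norm_ne_zero_iff.1 (by simp [lp.norm_apply_single_indexEquiv U hP hP2 x]))
    fun f x => (lp.apply_eq_mul_apply_indexEquiv U hP hP2 f x).symm.trans (hU f x)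
  exact Prod.ext (Equiv.ext (congrFun hσ.symm)) hh.symm

/-- (Banach) For `p ≠ 2`, every surjective linear isometry `U` of
`ℓ_p(X)` is of the form `(U f)(x) = h(x) f(σ(x))` for a unique permutation `σ` of `X`
and a unique function `h : X → S¹`. -/
theorem surjective_isometry_lp_eq_twisted_permutation
    (X : Type*) [Countable X] (p : ℝ) (hp1 : 1 ≤ p) (hp2 : p ≠ 2)
    [Fact (1 ≤ ENNReal.ofReal p)]
    (U : lp (fun _ : X => ℂ) (ENNReal.ofReal p) ≃ₗᵢ[ℂ]
      lp (fun _ : X => ℂ) (ENNReal.ofReal p)) :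
    ∃! σh : Equiv.Perm X × (X → ℂ),
      (∀ x : X, ‖σh.2 x‖ = 1) ∧
      ∀ (f : lp (fun _ : X => ℂ) (ENNReal.ofReal p)) (x : X),
        (U f) x = σh.2 x * f (σh.1 x) :=
  surjective_isometry_lp_eq_twisted_permutation_general X p hp2 U
end
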